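/- If P(z) is a polynomial of degree n, then for all complex α, β with |α| ≤ 1, |β| ≤ 1, all R ≥ 1, and all z with |z| ≥ 1: |P(Rz) − αP(z) + β(((R+1)/2)ⁿ − |α|)P(z)| ≤ |Rⁿ − α + β(((R+1)/2)ⁿ − |α|)| · |z|ⁿ · max_{|w|=1} |P(w)|. -/

import Mathlib

/-!
Write `γ = α - β (((R+1)/2)ⁿ - |α|)`, so that the left side is `|P(Rz) - γ P(z)|` and
`|γ| ≤ ((R+1)/2)ⁿ`. If the inequality failed at `z`, then for a suitable `c` with
`|c| > max_{|w|=1} |P(w)|` the polynomial `F = P - c Xⁿ` would satisfy `F(Rz) = γ F(z)`.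
By the maximum principle applied to the reversed polynomial, `|P(w)| ≤ |w|ⁿ max_{|w|=1} |P|`
for `|w| ≥ 1`, so `F` has degree `n` and all its zeros in the open unit disc. Comparing the
linear factors, `|Rz - r| > (R+1)/2 · |z - r|` for each zero `r`, hence
`|F(Rz)| > ((R+1)/2)ⁿ |F(z)| ≥ |γ| |F(z)|`, a contradiction.
-/

/-- The maximum of `|P(w)|` over the unit circle `|w| = 1`. -/
noncomputable def maxMod (P : Polynomial ℂ) : ℝ :=
  sSup ((fun w => ‖P.eval w‖) '' {w : ℂ | ‖w‖ = 1})

open Polynomial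

theorem Polynomial.eval_reverse_inv_mul_pow {K : Type*} [Field K] (P : K[X]) {x : K}
    (hx : x ≠ 0) : P.reverse.eval x⁻¹ * x ^ P.natDegree = P.eval x := by
  have := invertibleOfNonzero hx
  simpa [invOf_eq_inv] using eval₂_reverse_mul_pow (RingHom.id K) x P

theorem norm_eval_le_maxMod (P : ℂ[X]) {w : ℂ} (hw : ‖w‖ = 1) :
    ‖P.eval w‖ ≤ maxMod P := by
  refine le_csSup ?_ ⟨w, hw, rfl⟩
  have hsphere : {w : ℂ | ‖w‖ = 1} = Metric.sphere 0 1 := by ext; simp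
  rw [hsphere]
  exact ((isCompact_sphere 0 1).image (continuous_norm.comp P.continuous)).bddAbove

theorem norm_eval_reverse_le_maxMod (P : ℂ[X]) {u : ℂ} (hu : ‖u‖ ≤ 1) :
    ‖P.reverse.eval u‖ ≤ maxMod P := by
  have hfrontier :
      ∀ v ∈ frontier (Metric.ball (0 : ℂ) 1), ‖P.reverse.eval v‖ ≤ maxMod P := by
    intro v hv
    rw [frontier_ball _ one_ne_zero, mem_sphere_zero_iff_norm] at hv
    have hv' : ‖v⁻¹‖ = 1 := by rw [norm_inv, hv, inv_one]
    have h := P.eval_reverse_inv_mul_pow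
      (inv_ne_zero (norm_pos_iff.mp (by rw [hv]; exact one_pos)))
    rw [inv_inv] at h
    calc ‖P.reverse.eval v‖ = ‖P.reverse.eval v * v⁻¹ ^ P.natDegree‖ := by
          rw [norm_mul, norm_pow, hv', one_pow, mul_one]
      _ = ‖P.eval v⁻¹‖ := by rw [h]
      _ ≤ maxMod P := norm_eval_le_maxMod P hv'
  refine Complex.norm_le_of_forall_mem_frontier_norm_le Metric.isBounded_ball
    P.reverse.differentiable.diffContOnCl hfrontier ?_
  rwa [closure_ball _ one_ne_zero, mem_closedBall_zero_iff]

theorem norm_leadingCoeff_le_maxMod (P : ℂ[X]) : ‖P.leadingCoeff‖ ≤ maxMod P := by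
  simpa [← coeff_zero_eq_eval_zero] using norm_eval_reverse_le_maxMod P (u := 0) (by simp)

theorem norm_eval_le_pow_natDegree_mul_maxMod (P : ℂ[X]) {w : ℂ} (hw : 1 ≤ ‖w‖) :
    ‖P.eval w‖ ≤ ‖w‖ ^ P.natDegree * maxMod P := by
  have hw0 : w ≠ 0 := norm_pos_iff.mp (one_pos.trans_le hw)
  have hinv : ‖w⁻¹‖ ≤ 1 := by rw [norm_inv]; exact inv_le_one_of_one_le₀ hw
  calc ‖P.eval w‖ = ‖P.reverse.eval w⁻¹‖ * ‖w‖ ^ P.natDegree := by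
        rw [← P.eval_reverse_inv_mul_pow hw0, norm_mul, norm_pow]
    _ ≤ maxMod P * ‖w‖ ^ P.natDegree := by gcongr; exact norm_eval_reverse_le_maxMod P hinv
    _ = ‖w‖ ^ P.natDegree * maxMod P := mul_comm _ _

theorem add_one_div_two_mul_norm_sub_lt_norm_mul_sub {R : ℝ} (hR : 1 < R) {z r : ℂ}
    (hrz : ‖r‖ < ‖z‖) :
    (R + 1) / 2 * ‖z - r‖ < ‖(R : ℂ) * z - r‖ := by
  set t := (z * star r).re
  have hsub : ‖z - r‖ ^ 2 = ‖z‖ ^ 2 + ‖r‖ ^ 2 - 2 * t := by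
    simp only [Complex.sq_norm, Complex.normSq_sub, t, Complex.star_def]
  have hsubR : ‖(R : ℂ) * z - r‖ ^ 2 = R ^ 2 * ‖z‖ ^ 2 + ‖r‖ ^ 2 - 2 * R * t := by
    simp only [Complex.sq_norm, Complex.normSq_sub, Complex.normSq_mul, Complex.normSq_ofReal,
      t, Complex.star_def, mul_assoc, Complex.re_ofReal_mul]
    ring
  have ht : -(‖z‖ * ‖r‖) ≤ t := by
    have := Complex.abs_re_le_norm (z * star r)
    rw [norm_mul, norm_star] at this
    exact (abs_le.mp this).1
  -- `‖Rz - r‖² - ((R+1)/2)²‖z - r‖²` is `(R-1)/4` times a quantity that is at least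
  -- `(‖z‖ - ‖r‖)((3R+1)‖z‖ + (R+3)‖r‖)` because `t ≥ -‖z‖‖r‖`.
  have hgap : 0 < (R - 1) * ((‖z‖ - ‖r‖) * ((3 * R + 1) * ‖z‖ + (R + 3) * ‖r‖)) := by
    have := norm_nonneg r
    apply mul_pos (by linarith) (mul_pos (by linarith) (by nlinarith))
  have hsq : ((R + 1) / 2 * ‖z - r‖) ^ 2 < ‖(R : ℂ) * z - r‖ ^ 2 := by
    rw [mul_pow, hsub, hsubR]
    nlinarith [mul_le_mul_of_nonneg_left ht (by linarith : (0 : ℝ) ≤ R - 1)]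
  exact lt_of_pow_lt_pow_left₀ 2 (norm_nonneg _) hsq

theorem Polynomial.norm_eval_eq_mul_prod_roots (F : ℂ[X]) (w : ℂ) :
    ‖F.eval w‖ = ‖F.leadingCoeff‖ * (F.roots.map fun r => ‖w - r‖).prod := by
  rw [(IsAlgClosed.splits F).eval_eq_prod_roots, norm_mul,
    show ∀ m : Multiset ℂ, ‖m.prod‖ = (m.map norm).prod from
      map_multiset_prod (normHom : ℂ →*₀ ℝ), Multiset.map_map]
  rfl

theorem Polynomial.pow_mul_norm_eval_lt_norm_eval_mul {F : ℂ[X]} (hF : 0 < F.natDegree)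
    (hroots : ∀ r ∈ F.roots, ‖r‖ < 1) {R : ℝ} (hR : 1 < R) {z : ℂ} (hz : 1 ≤ ‖z‖) :
    ((R + 1) / 2) ^ F.natDegree * ‖F.eval z‖ < ‖F.eval (R * z)‖ := by
  have hF0 : F ≠ 0 := ne_zero_of_natDegree_gt hF
  have hcard : F.natDegree = Multiset.card F.roots :=
    (IsAlgClosed.splits F).natDegree_eq_card_roots
  have hprod : ((R + 1) / 2) ^ F.natDegree * (F.roots.map fun r => ‖z - r‖).prod
      < (F.roots.map fun r => ‖(R : ℂ) * z - r‖).prod := by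
    rw [hcard, ← Multiset.prod_replicate, ← Multiset.map_const', ← Multiset.prod_map_mul]
    refine Multiset.prod_map_lt_prod_map ?_ _ _ (fun r hr => ?_) (fun r hr => ?_)
    · rw [← Multiset.card_pos, ← hcard]; exact hF
    · exact mul_pos (by linarith) (norm_pos_iff.mpr (sub_ne_zero.mpr
        (ne_of_apply_ne norm ((hroots r hr).trans_le hz).ne')))
    · exact add_one_div_two_mul_norm_sub_lt_norm_mul_sub hR ((hroots r hr).trans_le hz)
  rw [norm_eval_eq_mul_prod_roots, norm_eval_eq_mul_prod_roots, mul_left_comm]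
  exact mul_lt_mul_of_pos_left hprod (norm_pos_iff.mpr (leadingCoeff_ne_zero.mpr hF0))

theorem Polynomial.eval_mul_sub_mul_eval_ne_zero {F : ℂ[X]} (hF : 0 < F.natDegree)
    (hzero : ∀ w : ℂ, 1 ≤ ‖w‖ → F.eval w ≠ 0) {R : ℝ} (hR : 1 < R) {γ : ℂ}
    (hγ : ‖γ‖ ≤ ((R + 1) / 2) ^ F.natDegree) {z : ℂ} (hz : 1 ≤ ‖z‖) :
    F.eval (R * z) - γ * F.eval z ≠ 0 := by
  have hroots : ∀ r ∈ F.roots, ‖r‖ < 1 := fun r hr =>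
    not_le.mp fun h => hzero r h ((mem_roots (ne_zero_of_natDegree_gt hF)).mp hr)
  have hgrowth := pow_mul_norm_eval_lt_norm_eval_mul hF hroots hR hz
  intro h
  rw [sub_eq_zero] at h
  have : ‖F.eval (R * z)‖ ≤ ((R + 1) / 2) ^ F.natDegree * ‖F.eval z‖ := by
    rw [h, norm_mul]; gcongr
  linarith

theorem Polynomial.eval_sub_C_mul_X_pow_ne_zero {P : ℂ[X]} {c : ℂ} (hc : maxMod P < ‖c‖)
    {w : ℂ} (hw : 1 ≤ ‖w‖) : (P - C c * X ^ P.natDegree).eval w ≠ 0 := by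
  have hwn : 0 < ‖w‖ ^ P.natDegree := pow_pos (one_pos.trans_le hw) _
  have hlt : ‖P.eval w‖ < ‖c * w ^ P.natDegree‖ := by
    rw [norm_mul, norm_pow, mul_comm]
    exact (norm_eval_le_pow_natDegree_mul_maxMod P hw).trans_lt
      (mul_lt_mul_of_pos_left hc hwn)
  simpa [sub_eq_zero] using ne_of_apply_ne norm hlt.ne

theorem Polynomial.natDegree_sub_C_mul_X_pow {P : ℂ[X]} {c : ℂ} (hc : maxMod P < ‖c‖) :
    (P - C c * X ^ P.natDegree).natDegree = P.natDegree := by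
  refine natDegree_eq_of_le_of_coeff_ne_zero ?_ ?_
  · exact (natDegree_sub_le _ _).trans (max_le le_rfl (natDegree_C_mul_X_pow_le _ _))
  · rw [coeff_sub, coeff_C_mul_X_pow, if_pos rfl, ← leadingCoeff, sub_ne_zero]
    exact ne_of_apply_ne norm ((norm_leadingCoeff_le_maxMod P).trans_lt hc).ne

theorem Polynomial.norm_eval_mul_sub_mul_eval_le {P : ℂ[X]} (hP : 0 < P.natDegree) {R : ℝ}
    (hR : 1 ≤ R) {γ : ℂ} (hγ : ‖γ‖ ≤ ((R + 1) / 2) ^ P.natDegree) {z : ℂ} (hz : 1 ≤ ‖z‖) :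
    ‖P.eval (R * z) - γ * P.eval z‖
      ≤ ‖(R : ℂ) ^ P.natDegree - γ‖ * ‖z‖ ^ P.natDegree * maxMod P := by
  set n := P.natDegree
  rcases hR.eq_or_lt with rfl | hR
  · rw [Complex.ofReal_one, one_mul, one_pow, ← one_sub_mul, norm_mul, mul_assoc]
    gcongr
    exact norm_eval_le_pow_natDegree_mul_maxMod P hz
  by_contra! hlt
  have hz0 : z ≠ 0 := norm_pos_iff.mp (one_pos.trans_le hz)
  have hA : (R : ℂ) ^ n - γ ≠ 0 := by
    have hs : ((R + 1) / 2) ^ n < R ^ n :=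
      pow_lt_pow_left₀ (by linarith) (by positivity) hP.ne'
    have := norm_sub_norm_le ((R : ℂ) ^ n) γ
    rw [norm_pow, Complex.norm_real, Real.norm_of_nonneg (by positivity)] at this
    exact norm_pos_iff.mp (by linarith)
  -- Subtracting the right multiple of `X ^ n` makes the left side vanish at `z`.
  set c := (P.eval (R * z) - γ * P.eval z) / (((R : ℂ) ^ n - γ) * z ^ n)
  have hc : maxMod P < ‖c‖ := by
    rw [norm_div, norm_mul, norm_pow, lt_div_iff₀ (by positivity)]
    linarith
  have hdeg : (P - C c * X ^ n).natDegree = n := natDegree_sub_C_mul_X_pow hc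
  refine eval_mul_sub_mul_eval_ne_zero (by rwa [hdeg])
    (fun w hw => eval_sub_C_mul_X_pow_ne_zero hc hw) hR (by rwa [hdeg]) hz ?_
  simp only [eval_sub, eval_mul, eval_C, eval_pow, eval_X, c]
  field_simp
  ring

/-- Theorem A (Aziz–Rather), first part. -/
theorem thmA_first (P : Polynomial ℂ) (n : ℕ) (hn : 1 ≤ n) (hdeg : P.natDegree = n)
    (α β : ℂ) (hα : ‖α‖ ≤ 1) (hβ : ‖β‖ ≤ 1)
    (R : ℝ) (hR : 1 ≤ R) :
    ∀ z : ℂ, 1 ≤ ‖z‖ →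
      ‖P.eval ((R : ℂ) * z) - α * P.eval z
          + β * ((((R : ℂ) + 1) / 2) ^ n - ((‖α‖ : ℝ) : ℂ)) * P.eval z‖
        ≤ ‖(R : ℂ) ^ n - α
            + β * ((((R : ℂ) + 1) / 2) ^ n - ((‖α‖ : ℝ) : ℂ))‖
          * ‖z‖ ^ n * maxMod P := by
  intro z hz
  subst hdeg
  set s := ((R + 1) / 2) ^ P.natDegree
  have hc : 0 ≤ s - ‖α‖ := sub_nonneg.mpr (hα.trans (one_le_pow₀ (by linarith)))
  have hcast :
      (((R : ℂ) + 1) / 2) ^ P.natDegree - ((‖α‖ : ℝ) : ℂ) = ((s - ‖α‖ : ℝ) : ℂ) := by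
    push_cast [s]; ring
  have hγ : ‖α - β * ((s - ‖α‖ : ℝ) : ℂ)‖ ≤ s := by
    calc ‖α - β * ((s - ‖α‖ : ℝ) : ℂ)‖ ≤ ‖α‖ + ‖β‖ * (s - ‖α‖) := by
          refine (norm_sub_le _ _).trans_eq ?_
          rw [norm_mul, Complex.norm_real, Real.norm_of_nonneg hc]
      _ ≤ ‖α‖ + 1 * (s - ‖α‖) := by gcongr
      _ = s := by ring
  have key := norm_eval_mul_sub_mul_eval_le hn hR hγ hz
  rw [hcast]
  convert key using 3
  · ring
  · congr 1; ring
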